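/- (Example 4.4, Nakagami fading: limits of k_β and existence of a valid β.) Let 0 < σ̲ ≤ σ̄, m ≥ 1/2, Ω > 0, σ̲_X > 0, and for β > 0 define k_β := (2σ̄²m/β)·ln( (β(2mσ̄² + Ωσ̲_X²) + 2mσ̄²)/(2mσ̄²β + 2mσ̄²) ) + (σ̲²/β)·ln(1+β). Then k_β → Ωσ̲_X² + σ̲² as β → 0⁺ and k_β → 0 as β → ∞. Moreover, if Ωσ̲_X² + σ̲² > σ̄², then there exists β > 0 such that k_β > σ̄² and 1/2 − (1/2)·ln(σ̄²/k_β) − k_β/(2σ̄²) < 0. -/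

import Mathlib

open Real Filter Set Topology

/-!
Write `a = 2mσ̄²`, `c = Ωσ̲_X²` and `G β = a log((a + c)β + a) - a log(aβ + a) + σ̲² log(β + 1)`
(`kNumerator a c σ̲² β`), so that `k β = G β / β` for `β > 0`. Since `G 0 = 0`, the limit at `0⁺`
is `G'(0) = c + σ̲²`, and the limit at `∞` is `0` because each `log(pβ + q)` is `o(β)`.
If `c + σ̲² > σ̄²`, any `β` close enough to `0` has `k β > σ̄²`, and then the last inequality is
`log t < t - 1` for `t = k β / σ̄² ≠ 1`.
-/

lemma hasDerivAt_log_mul_add (p : ℝ) {q x : ℝ} (h : p * x + q ≠ 0) :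
    HasDerivAt (fun x => log (p * x + q)) (p / (p * x + q)) x := by
  simpa using (((hasDerivAt_id x).const_mul p).add_const q).log h

lemma tendsto_log_mul_add_div_atTop {p : ℝ} (hp : 0 < p) (q : ℝ) :
    Tendsto (fun x => log (p * x + q) / x) atTop (𝓝 0) := by
  have hlin : Tendsto (fun x => p * x + q) atTop atTop :=
    tendsto_atTop_add_const_right _ q (tendsto_id.const_mul_atTop hp)
  refine ((tendsto_pow_log_div_mul_add_atTop p⁻¹ (-(q / p)) 1 (inv_ne_zero hp.ne')).comp
    hlin).congr fun x => ?_
  simp only [Function.comp_apply, pow_one]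
  congr 1
  field_simp
  ring

lemma HasDerivAt.tendsto_div_nhdsGT {G : ℝ → ℝ} {L : ℝ} (hG : HasDerivAt G L 0) (hG0 : G 0 = 0) :
    Tendsto (fun t => G t / t) (𝓝[>] 0) (𝓝 L) := by
  refine hG.tendsto_slope_zero_right.congr fun t => ?_
  rw [zero_add, hG0, sub_zero, smul_eq_mul, inv_mul_eq_div]

-- `1 * β + 1` keeps all three logarithms in the shape `log (p * β + q)`.
noncomputable def kNumerator (a c s β : ℝ) : ℝ :=
  a * log ((a + c) * β + a) - a * log (a * β + a) + s * log (1 * β + 1)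

section kNumerator

variable {a c : ℝ} (s : ℝ)

lemma tendsto_kNumerator_div_nhdsGT (ha : a ≠ 0) :
    Tendsto (fun β => kNumerator a c s β / β) (𝓝[>] 0) (𝓝 (c + s)) := by
  have hG := (((hasDerivAt_log_mul_add (a + c) (x := 0) (by simpa using ha)).const_mul a).sub
    ((hasDerivAt_log_mul_add a (x := 0) (by simpa using ha)).const_mul a)).add
    ((hasDerivAt_log_mul_add 1 (q := 1) (x := 0) (by norm_num)).const_mul s)
  refine (hG.congr_deriv ?_).tendsto_div_nhdsGT (by simp)
  simp only [mul_zero, zero_add, div_one, div_self ha]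
  field_simp
  ring

lemma tendsto_kNumerator_div_atTop (ha : 0 < a) (hac : 0 < a + c) :
    Tendsto (fun β => kNumerator a c s β / β) atTop (𝓝 0) := by
  have := (((tendsto_log_mul_add_div_atTop hac a).const_mul a).sub
    ((tendsto_log_mul_add_div_atTop ha a).const_mul a)).add
    ((tendsto_log_mul_add_div_atTop one_pos 1).const_mul s)
  simp only [mul_zero, sub_zero, add_zero] at this
  exact this.congr fun β => by simp only [kNumerator]; ring

end kNumerator

lemma half_sub_half_log_div_sub_div_neg {s t : ℝ} (hs : 0 < s) (ht : 0 < t) (hst : s ≠ t) :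
    1 / 2 - 1 / 2 * log (s / t) - t / (2 * s) < 0 := by
  have hlog : log (t / s) < t / s - 1 :=
    log_lt_sub_one_of_pos (div_pos ht hs) fun h => hst ((div_eq_one_iff_eq hs.ne').mp h).symm
  rw [← inv_div t s, log_inv]
  have : t / (2 * s) = t / s / 2 := by ring
  linarith

/-- Example 4.4 (Nakagami fading): with
`k_β = (2σ̄²m/β)·ln((β(2mσ̄²+Ωσ̲_X²)+2mσ̄²)/(2mσ̄²β+2mσ̄²)) + (σ̲²/β)·ln(1+β)`,
one has `k_β → Ωσ̲_X² + σ̲²` as `β → 0⁺`, `k_β → 0` as `β → ∞`, and if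
`Ωσ̲_X² + σ̲² > σ̄²` then some `β > 0` satisfies `k_β > σ̄²` and
`1/2 − (1/2)·ln(σ̄²/k_β) − k_β/(2σ̄²) < 0`. -/
theorem nakagami_fading_kbeta
    (σlow σup m Om σX : ℝ) (hσlow : 0 < σlow) (hσle : σlow ≤ σup)
    (hm : 1 / 2 ≤ m) (hOm : 0 < Om) (hσX : 0 < σX)
    (k : ℝ → ℝ)
    (hk : ∀ β, k β = (2 * σup ^ 2 * m / β)
        * Real.log ((β * (2 * m * σup ^ 2 + Om * σX ^ 2) + 2 * m * σup ^ 2)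
            / (2 * m * σup ^ 2 * β + 2 * m * σup ^ 2))
      + (σlow ^ 2 / β) * Real.log (1 + β)) :
    Tendsto k (nhdsWithin 0 (Ioi 0)) (nhds (Om * σX ^ 2 + σlow ^ 2)) ∧
    Tendsto k atTop (nhds 0) ∧
    (σup ^ 2 < Om * σX ^ 2 + σlow ^ 2 →
      ∃ β : ℝ, 0 < β ∧ σup ^ 2 < k β ∧
        1 / 2 - (1 / 2) * Real.log (σup ^ 2 / k β) - k β / (2 * σup ^ 2) < 0) := by
  have hσup : 0 < σup := hσlow.trans_le hσle
  have hm0 : 0 < m := by linarith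
  set a := 2 * m * σup ^ 2
  set c := Om * σX ^ 2
  have ha : 0 < a := by positivity
  have hc : 0 < c := by positivity
  have hkG : ∀ β > 0, k β = kNumerator a c (σlow ^ 2) β / β := by
    intro β hβ
    have hnum : 0 < β * (a + c) + a := by positivity
    have hden : 0 < a * β + a := by positivity
    rw [hk, show 2 * σup ^ 2 * m = a by ring, log_div hnum.ne' hden.ne', kNumerator]
    ring_nf
  have hzero : Tendsto k (𝓝[>] 0) (𝓝 (c + σlow ^ 2)) :=
    (tendsto_kNumerator_div_nhdsGT _ ha.ne').congr' <|
      eventually_nhdsWithin_of_forall fun β hβ => (hkG β hβ).symm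
  refine ⟨hzero, (tendsto_kNumerator_div_atTop (σlow ^ 2) ha (by positivity : 0 < a + c)).congr' ?_, fun hlt => ?_⟩
  · filter_upwards [eventually_gt_atTop 0] with β hβ using (hkG β hβ).symm
  · obtain ⟨β, hkβ, hβ⟩ :=
      ((hzero.eventually (eventually_gt_nhds hlt)).and self_mem_nhdsWithin).exists
    exact ⟨β, hβ, hkβ,
      half_sub_half_log_div_sub_div_neg (by positivity) ((pow_pos hσup 2).trans hkβ) hkβ.ne⟩
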